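/- arXiv:0707.1801 — 8 statements merged into one kernel-verified Lean document; each statement's English description precedes it below -/
import Mathlib

section
/- Let k be an algebraically closed field, let A be a d×m integer matrix of rank d, and let D be an (m−d)×m integer matrix whose rows form a ℤ-basis of the lattice {u ∈ ℤ^m : Au = 0}. Grade the Laurent polynomial ring k[x_1^{±1},…,x_m^{±1}] over ℤ^d by declaring the monomial x^u to have degree Au, let I be a homogeneous ideal of k[x_1^{±1},…,x_m^{±1}], and let φ : k[z_1^{±1},…,z_{m−d}^{±1}] → k[x_1^{±1},…,x_m^{±1}] be the k-algebra homomorphism with φ(z_i) = ∏_{j=1}^m x_j^{D_{ij}}. Then the degree-zero subalgebra of k[x_1^{±1},…,x_m^{±1}]/I (with its induced ℤ^d-grading) is isomorphic as a k-algebra to k[z_1^{±1},…,z_{m−d}^{±1}]/φ^{-1}(I). -/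
/-!
The map `φ` is `mapDomain` along `v ↦ vD`, so its image is spanned by the monomials `x^u` with
`u` in the row lattice of `D`, i.e. with `Au = 0`: it is exactly the degree-zero subalgebra `S₀`.
The degree-zero part of `k[x^{±1}]/I` is the image of `S₀ = range φ` under the quotient map, hence
the range of `k[z^{±1}] → k[x^{±1}]/I`, whose kernel is `φ⁻¹(I)`.
-/

namespace AddMonoidAlgebra

variable {R M N : Type*} [CommSemiring R] [AddMonoid M] [AddMonoid N]

theorem mem_range_mapDomainAlgHom {f : M →+ N} {p : AddMonoidAlgebra R N} :
    p ∈ (mapDomainAlgHom R R f).range ↔ ↑p.coeff.support ⊆ Set.range f := by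
  classical
  constructor
  · rintro ⟨q, rfl⟩
    refine (Finset.coe_subset.mpr Finsupp.mapDomain_support).trans ?_
    simp
  · intro hp
    rw [← sum_coeff_single p]
    refine Subalgebra.sum_mem _ fun n hn => ?_
    obtain ⟨m, rfl⟩ := hp hn
    exact ⟨single m (p.coeff (f m)), by simp⟩

theorem algHom_eq_mapDomainAlgHom {f : M →+ N}
    {φ : AddMonoidAlgebra R M →ₐ[R] AddMonoidAlgebra R N}
    (hφ : ∀ m, φ (single m 1) = single (f m) 1) : φ = mapDomainAlgHom R R f :=
  algHom_ext (fun m => by simp [hφ]) (Subsingleton.elim _ _)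

end AddMonoidAlgebra

noncomputable def Ideal.quotientComapAlgEquivMapRange {k R S : Type*} [CommSemiring k]
    [CommRing R] [CommRing S] [Algebra k R] [Algebra k S] (ψ : R →ₐ[k] S) (I : Ideal S) :
    (R ⧸ I.comap ψ) ≃ₐ[k] ψ.range.map (Ideal.Quotient.mkₐ k I) :=
  have hker : I.comap ψ = RingHom.ker ((Ideal.Quotient.mkₐ k I).comp ψ) := by
    ext; simp [Ideal.Quotient.eq_zero_iff_mem]
  (Ideal.quotientEquivAlgOfEq k hker).trans <|
    (Ideal.quotientKerEquivRange _).trans (Subalgebra.equivOfEq _ _ (AlgHom.range_comp _ _))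

theorem Matrix.mulVec_eq_zero_iff_mem_range_vecMul {R m n p : Type*} [CommRing R]
    [Fintype m] [Fintype n] {A : Matrix p n R} {D : Matrix m n R}
    (hD : LinearMap.range D.vecMulLinear = LinearMap.ker A.mulVecLin) (u : n → R) :
    A.mulVec u = 0 ↔ u ∈ Set.range (Matrix.vecMul · D) := by
  rw [← Matrix.mulVecLin_apply, ← LinearMap.mem_ker, ← hD]; rfl

theorem degree_zero_part_of_torus_quotient_general
    {k : Type*} [Field k]
    (d m : ℕ)
    (A : Matrix (Fin d) (Fin m) ℤ)
    (D : Matrix (Fin (m - d)) (Fin m) ℤ)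
    (hDspan : LinearMap.range D.vecMulLinear = LinearMap.ker A.mulVecLin)
    (I : Ideal (AddMonoidAlgebra k (Fin m → ℤ)))
    (φ : AddMonoidAlgebra k (Fin (m - d) → ℤ) →ₐ[k] AddMonoidAlgebra k (Fin m → ℤ))
    (hφ : ∀ v : Fin (m - d) → ℤ,
      φ (AddMonoidAlgebra.single v 1) = AddMonoidAlgebra.single (Matrix.vecMul v D) 1)
    (S₀ : Subalgebra k (AddMonoidAlgebra k (Fin m → ℤ)))
    (hS₀ : ∀ f, f ∈ S₀ ↔ ∀ u ∈ f.coeff.support, A.mulVec u = 0) :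
    Nonempty ((S₀.map (Ideal.Quotient.mkₐ k I)) ≃ₐ[k]
      (AddMonoidAlgebra k (Fin (m - d) → ℤ) ⧸ I.comap φ)) := by
  have hS₀_eq_range : S₀ = φ.range := by
    obtain rfl := AddMonoidAlgebra.algHom_eq_mapDomainAlgHom
      (f := D.vecMulLinear.toAddMonoidHom) hφ
    ext p
    rw [hS₀, AddMonoidAlgebra.mem_range_mapDomainAlgHom]
    simp only [Matrix.mulVec_eq_zero_iff_mem_range_vecMul hDspan]
    rfl
  rw [hS₀_eq_range]
  exact ⟨(Ideal.quotientComapAlgEquivMapRange φ I).symm⟩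

/-- Let `k` be an algebraically closed field, `A` a `d × m` integer
matrix of rank `d`, and `D` an `(m-d) × m` integer matrix whose rows form a ℤ-basis of
`{u ∈ ℤ^m : Au = 0}`.  Grade the Laurent polynomial ring
`k[x₁^{±1}, …, x_m^{±1}] = k[ℤ^m]` by `deg (x^u) = Au ∈ ℤ^d`, let `I` be a homogeneous
ideal, and let `φ : k[z₁^{±1}, …, z_{m-d}^{±1}] → k[x₁^{±1}, …, x_m^{±1}]` be the
`k`-algebra map with `φ(z_i) = ∏_j x_j^{D i j}` (i.e. `φ(z^v) = x^{vD}` on monomials).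
Then the degree-zero subalgebra of `k[x^{±1}]/I` (the image of the degree-zero
subalgebra `S₀` in the quotient) is isomorphic as a `k`-algebra to
`k[z^{±1}]/φ⁻¹(I)`. -/
theorem degree_zero_part_of_torus_quotient
    {k : Type*} [Field k] [IsAlgClosed k]
    (d m : ℕ) (hdm : d ≤ m)
    (A : Matrix (Fin d) (Fin m) ℤ) (hrank : A.rank = d)
    (D : Matrix (Fin (m - d)) (Fin m) ℤ)
    (hDinj : Function.Injective D.vecMulLinear)
    (hDspan : LinearMap.range D.vecMulLinear = LinearMap.ker A.mulVecLin)
    (I : Ideal (AddMonoidAlgebra k (Fin m → ℤ)))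
    (hI : ∃ Gens : Set (AddMonoidAlgebra k (Fin m → ℤ)),
      (∀ f ∈ Gens, ∃ a : Fin d → ℤ, ∀ u ∈ f.coeff.support, A.mulVec u = a) ∧
      I = Ideal.span Gens)
    (φ : AddMonoidAlgebra k (Fin (m - d) → ℤ) →ₐ[k] AddMonoidAlgebra k (Fin m → ℤ))
    (hφ : ∀ v : Fin (m - d) → ℤ,
      φ (AddMonoidAlgebra.single v 1) = AddMonoidAlgebra.single (Matrix.vecMul v D) 1)
    (S₀ : Subalgebra k (AddMonoidAlgebra k (Fin m → ℤ)))
    (hS₀ : ∀ f, f ∈ S₀ ↔ ∀ u ∈ f.coeff.support, A.mulVec u = 0) :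
    Nonempty ((S₀.map (Ideal.Quotient.mkₐ k I)) ≃ₐ[k]
      (AddMonoidAlgebra k (Fin (m - d) → ℤ) ⧸ I.comap φ)) :=
  degree_zero_part_of_torus_quotient_general d m A D hDspan I φ hφ S₀ hS₀
end

section
/- Let k be an algebraically closed field, let A be a d×m integer matrix of rank d, and let D be an (m−d)×m integer matrix whose rows form a ℤ-basis of the lattice {u ∈ ℤ^m : Au = 0}. Grade k[x_1^{±1},…,x_m^{±1}] over ℤ^d by declaring x^u to have degree Au, and let φ : k[z_1^{±1},…,z_{m−d}^{±1}] → k[x_1^{±1},…,x_m^{±1}] be the k-algebra homomorphism with φ(z_i) = ∏_{j=1}^m x_j^{D_{ij}}. Then φ is injective, and every homogeneous ideal I of k[x_1^{±1},…,x_m^{±1}] is generated as an ideal by the set φ(φ^{-1}(I)). -/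
/-!
`φ` is the map of group algebras induced by the injective homomorphism `v ↦ v D`, hence
injective. If `x^{u₀}` occurs in a homogeneous `f`, every exponent of `f` lies in
`u₀ + ker A = u₀ + ℤ^{m-d} D`, so `x^{-u₀} f` lies in the image of `φ`; as `x^{u₀}` is a unit,
`f` is a multiple of this element of `φ(φ⁻¹(I))`.
-/

open AddMonoidAlgebra

namespace AddMonoidAlgebra

variable {k G H K : Type*}

theorem isUnit_single_one [Semiring k] [AddGroup H] (u : H) : IsUnit (single u (1 : k)) :=
  isUnit_iff_exists.mpr ⟨single (-u) 1,
    by rw [single_mul_single, add_neg_cancel, mul_one, one_def],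
    by rw [single_mul_single, neg_add_cancel, mul_one, one_def]⟩

theorem exists_mapDomain_eq_of_support_subset_range [Semiring k] {F : G → H} {f : k[H]}
    (hf : ↑f.coeff.support ⊆ Set.range F) : ∃ g : k[G], mapDomain F g = f := by
  have hsupp : f.coeff ∈ Finsupp.supported k k (F '' Set.univ) := by
    rwa [Finsupp.mem_supported, Set.image_univ]
  rw [← Finsupp.lmapDomain_supported] at hsupp
  obtain ⟨g, -, hg⟩ := hsupp
  exact ⟨ofCoeff g, coeff_injective hg⟩

theorem exists_eq_single_mul_mapDomain [Semiring k] [AddGroup H] {F : G → H} {f : k[H]} {u₀ : H}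
    (hf : ∀ u ∈ f.coeff.support, -u₀ + u ∈ Set.range F) :
    ∃ g : k[G], f = single u₀ 1 * mapDomain F g := by
  obtain ⟨g, hg⟩ := exists_mapDomain_eq_of_support_subset_range (F := F)
    (f := single (-u₀) 1 * f) fun u hu => by
      simpa using hf (u₀ + u) (by simpa [coeff_single_mul_apply] using hu)
  refine ⟨g, ?_⟩
  rw [hg, ← mul_assoc, single_mul_single, add_neg_cancel, mul_one, ← one_def, one_mul]

theorem map_comap_mapDomainAlgHom_span_of_homogeneous
    [CommSemiring k] [AddGroup G] [AddGroup H] [AddGroup K]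
    (F : G →+ H) (ψ : H →+ K) (hF : ψ.ker ≤ F.range) {S : Set k[H]}
    (hS : ∀ f ∈ S, ∃ a, ∀ u ∈ f.coeff.support, ψ u = a) :
    ((Ideal.span S).comap (mapDomainAlgHom k k F)).map (mapDomainAlgHom k k F) =
      Ideal.span S := by
  refine le_antisymm Ideal.map_comap_le (Ideal.span_le.mpr fun f hf => ?_)
  obtain ⟨a, ha⟩ := hS f hf
  obtain ⟨u₀, hu₀⟩ : ∃ u₀, ∀ u ∈ f.coeff.support, -u₀ + u ∈ Set.range F := by
    rcases f.coeff.support.eq_empty_or_nonempty with h | ⟨u₀, hu₀⟩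
    · exact ⟨0, by simp [h]⟩
    · exact ⟨u₀, fun u hu => hF (by simp [ha u hu, ha u₀ hu₀])⟩
  obtain ⟨g, rfl⟩ := exists_eq_single_mul_mapDomain hu₀
  have hg : g ∈ (Ideal.span S).comap (mapDomainAlgHom k k F) :=
    (Ideal.unit_mul_mem_iff_mem _ (isUnit_single_one u₀)).mp (Ideal.subset_span hf)
  exact Ideal.mul_mem_left _ _ (Ideal.mem_map_of_mem _ hg)

end AddMonoidAlgebra

theorem injective_and_homogeneous_ideal_generated_by_preimage_general
    {k : Type*} [Field k]
    (d m : ℕ)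
    (A : Matrix (Fin d) (Fin m) ℤ)
    (D : Matrix (Fin (m - d)) (Fin m) ℤ)
    (hDinj : Function.Injective D.vecMulLinear)
    (hDspan : LinearMap.range D.vecMulLinear = LinearMap.ker A.mulVecLin)
    (I : Ideal (AddMonoidAlgebra k (Fin m → ℤ)))
    (hI : ∃ Gens : Set (AddMonoidAlgebra k (Fin m → ℤ)),
      (∀ f ∈ Gens, ∃ a : Fin d → ℤ, ∀ u ∈ f.coeff.support, A.mulVec u = a) ∧
      I = Ideal.span Gens)
    (φ : AddMonoidAlgebra k (Fin (m - d) → ℤ) →ₐ[k] AddMonoidAlgebra k (Fin m → ℤ))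
    (hφ : ∀ v : Fin (m - d) → ℤ,
      φ (AddMonoidAlgebra.single v 1) = AddMonoidAlgebra.single (Matrix.vecMul v D) 1) :
    Function.Injective φ ∧ I = Ideal.span (⇑φ '' ↑(I.comap φ)) := by
  obtain rfl : φ = mapDomainAlgHom k k D.vecMulLinear.toAddMonoidHom :=
    algHom_ext (fun v => by simpa using hφ v) (Subsingleton.elim _ _)
  obtain ⟨Gens, hGens, rfl⟩ := hI
  refine ⟨mapDomain_injective hDinj, ?_⟩
  refine (map_comap_mapDomainAlgHom_span_of_homogeneous _ A.mulVecLin.toAddMonoidHom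
    (fun u hu => ?_) hGens).symm
  have hu' : u ∈ LinearMap.ker A.mulVecLin := hu
  rw [← hDspan] at hu'
  exact hu'

/-- With `A`, `D`, the grading `deg (x^u) = Au`, and
`φ(z_i) = ∏_j x_j^{D i j}` as in Statement 0: `φ` is injective, and every homogeneous
ideal `I` of `k[x₁^{±1}, …, x_m^{±1}]` is generated as an ideal by `φ(φ⁻¹(I))`. -/
theorem injective_and_homogeneous_ideal_generated_by_preimage
    {k : Type*} [Field k] [IsAlgClosed k]
    (d m : ℕ) (hdm : d ≤ m)
    (A : Matrix (Fin d) (Fin m) ℤ) (hrank : A.rank = d)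
    (D : Matrix (Fin (m - d)) (Fin m) ℤ)
    (hDinj : Function.Injective D.vecMulLinear)
    (hDspan : LinearMap.range D.vecMulLinear = LinearMap.ker A.mulVecLin)
    (I : Ideal (AddMonoidAlgebra k (Fin m → ℤ)))
    (hI : ∃ Gens : Set (AddMonoidAlgebra k (Fin m → ℤ)),
      (∀ f ∈ Gens, ∃ a : Fin d → ℤ, ∀ u ∈ f.coeff.support, A.mulVec u = a) ∧
      I = Ideal.span Gens)
    (φ : AddMonoidAlgebra k (Fin (m - d) → ℤ) →ₐ[k] AddMonoidAlgebra k (Fin m → ℤ))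
    (hφ : ∀ v : Fin (m - d) → ℤ,
      φ (AddMonoidAlgebra.single v 1) = AddMonoidAlgebra.single (Matrix.vecMul v D) 1) :
    Function.Injective φ ∧ I = Ideal.span (⇑φ '' ↑(I.comap φ)) :=
  injective_and_homogeneous_ideal_generated_by_preimage_general d m A D hDinj hDspan I hI φ hφ
end

section
/- Let M be an additive abelian group and let T be a commutative ring graded by M such that for every a ∈ M with T_a ≠ {0} there exists a unit of T lying in the graded piece T_a. Then every homogeneous ideal K of T is generated as an ideal by its degree-zero part K ∩ T_0. -/
/-- Let `T` be a commutative ring graded by an abelian group `M` such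
that every nonzero graded piece contains a unit of `T`.  Then every homogeneous ideal
`K` of `T` is generated (as an ideal) by its degree-zero part `K ∩ T₀`. -/
theorem homogeneous_ideal_generated_by_degree_zero_part
    {M : Type*} [AddCommGroup M] [DecidableEq M]
    {T : Type*} [CommRing T]
    (𝒜 : M → AddSubgroup T) [GradedRing 𝒜]
    (hunit : ∀ a : M, 𝒜 a ≠ ⊥ → ∃ t ∈ 𝒜 a, IsUnit t)
    (K : Ideal T) (hK : Ideal.IsHomogeneous 𝒜 K) :
    K = Ideal.span ((K : Set T) ∩ (𝒜 0 : Set T)) := by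
  classical
  apply le_antisymm
  · -- key: every homogeneous element of K lies in the span
    have key : ∀ (i : M) (y : T), y ∈ 𝒜 i → y ∈ K →
        y ∈ Ideal.span ((K : Set T) ∩ (𝒜 0 : Set T)) := by
      intro i y hyi hyK
      by_cases hy0 : y = 0
      · simp [hy0]
      have hne : 𝒜 i ≠ ⊥ := by
        intro h
        exact hy0 (by simpa [h, AddSubgroup.mem_bot] using hyi)
      obtain ⟨u, hu, huu⟩ := hunit i hne
      obtain ⟨U, rfl⟩ := huu
      set v : T := (↑U⁻¹ : T) with hv
      set w : T := (DirectSum.decompose 𝒜 v (-i) : T) with hw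
      have hwmem : w ∈ 𝒜 (-i) := SetLike.coe_mem _
      have huw : (U : T) * w = 1 := by
        have h1 : (DirectSum.decompose 𝒜 ((U : T) * v) (i + -i) : T)
            = (U : T) * w := DirectSum.coe_decompose_mul_add_of_left_mem 𝒜 hu
        have h2 : (U : T) * v = 1 := U.mul_inv
        rw [h2, add_neg_cancel] at h1
        rw [← h1, DirectSum.decompose_of_mem_same 𝒜 (SetLike.one_mem_graded 𝒜)]
      have hwy : w * y ∈ (K : Set T) ∩ (𝒜 0 : Set T) := by
        constructor
        · exact K.mul_mem_left w hyK
        · have := SetLike.mul_mem_graded hwmem hyi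
          simpa using this
      have : y = (U : T) * (w * y) := by
        rw [← mul_assoc, huw, one_mul]
      rw [this]
      exact Ideal.mul_mem_left _ _ (Ideal.subset_span hwy)
    intro x hx
    rw [← DirectSum.sum_support_decompose 𝒜 x]
    apply Ideal.sum_mem
    intro i _
    exact key i _ (SetLike.coe_mem _) (hK i hx)
  · rw [Ideal.span_le]
    exact fun x hx => hx.1
end

section
/- The rows of D form a ℤ-basis of the lattice {u ∈ ℤ^P : A_n u = 0}; in particular A_n·Dᵀ = 0, and the square submatrix of D consisting of the columns indexed by ℰ is the identity matrix. -/
/-! Statement 5.  Labels `1, …, n` are realized as the nonzero elements of `Fin (n+1)`.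
`PIdx n` is the set of pairs `(k, l)` with `1 ≤ k < l ≤ n`, and `EIdx n` is the set of
pairs `(i, j)` with `2 ≤ i < j ≤ n`, `(i, j) ≠ (2, 3)`. -/

/-- Pairs `(k,l)` with `1 ≤ k < l ≤ n`. -/
abbrev PIdx (n : ℕ) := {p : Fin (n + 1) × Fin (n + 1) // 0 < p.1 ∧ p.1 < p.2}

/-- Pairs `(i,j)` with `2 ≤ i < j ≤ n` and `(i,j) ≠ (2,3)`. -/
abbrev EIdx (n : ℕ) :=
  {q : Fin (n + 1) × Fin (n + 1) //
    1 < q.1 ∧ q.1 < q.2 ∧ q ≠ ((2 : Fin (n + 1)), (3 : Fin (n + 1)))}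

/-- The `n × P` matrix `A_n` whose column indexed by `(k,l)` is `e_k + e_l`
(row `i : Fin n` corresponds to the label `i + 1`). -/
def Amat (n : ℕ) : Matrix (Fin n) (PIdx n) ℤ := fun i p =>
  (if p.val.1 = i.succ then 1 else 0) + (if p.val.2 = i.succ then 1 else 0)

/-- The `ℰ × P` Gale dual matrix `D`: the entry at row `(i,j) ∈ ℰ`, column `(k,l) ∈ P`
is `1` if `(k,l) = (i,j)`, or if `(k,l) ∈ {(1,2),(1,3)}` and `{k,l} ∩ {i,j} = ∅`;
it is `-1` if `(k,l) = (2,3)`, or if `(k,l) ∈ {(1,i),(1,j)}` and `{k,l} ∩ {2,3} = ∅`;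
and it is `0` otherwise. -/
def Dmat (n : ℕ) : Matrix (EIdx n) (PIdx n) ℤ := fun q p =>
  if p.val = q.val then 1
  else if (p.val = ((1 : Fin (n + 1)), (2 : Fin (n + 1))) ∨
           p.val = ((1 : Fin (n + 1)), (3 : Fin (n + 1)))) ∧
          p.val.1 ≠ q.val.1 ∧ p.val.1 ≠ q.val.2 ∧
          p.val.2 ≠ q.val.1 ∧ p.val.2 ≠ q.val.2 then 1
  else if p.val = ((2 : Fin (n + 1)), (3 : Fin (n + 1))) then -1
  else if (p.val = ((1 : Fin (n + 1)), q.val.1) ∨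
           p.val = ((1 : Fin (n + 1)), q.val.2)) ∧
          p.val.1 ≠ (2 : Fin (n + 1)) ∧ p.val.1 ≠ (3 : Fin (n + 1)) ∧
          p.val.2 ≠ (2 : Fin (n + 1)) ∧ p.val.2 ≠ (3 : Fin (n + 1)) then -1
  else 0

/-- The inclusion `ℰ ⊆ P`. -/
def EtoP (n : ℕ) (q : EIdx n) : PIdx n :=
  ⟨q.val, lt_of_le_of_lt (Fin.zero_le _) q.property.1, q.property.2.1⟩


namespace St5
variable {n : ℕ}

lemma val1 (hn : 4 ≤ n) : ((1 : Fin (n+1)) : ℕ) = 1 := by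
  rw [Fin.val_one']; exact Nat.mod_eq_of_lt (by omega)
lemma val2 (hn : 4 ≤ n) : ((2 : Fin (n+1)) : ℕ) = 2 := by
  rw [Fin.coe_ofNat_eq_mod]; exact Nat.mod_eq_of_lt (by omega)
lemma val3 (hn : 4 ≤ n) : ((3 : Fin (n+1)) : ℕ) = 3 := by
  rw [Fin.coe_ofNat_eq_mod]; exact Nat.mod_eq_of_lt (by omega)

lemma Efacts (hn : 4 ≤ n) (q : EIdx n) :
    2 ≤ (q.1.1 : ℕ) ∧ (q.1.1 : ℕ) < (q.1.2 : ℕ) ∧ (q.1.2 : ℕ) ≤ n ∧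
    4 ≤ (q.1.2 : ℕ) ∧ ¬((q.1.1 : ℕ) = 2 ∧ (q.1.2 : ℕ) = 3) := by
  obtain ⟨h1, h2, h3⟩ := q.2
  rw [Fin.lt_def] at h1 h2
  rw [val1 hn] at h1
  have hlt := q.1.2.isLt
  have hne : ¬((q.1.1 : ℕ) = 2 ∧ (q.1.2 : ℕ) = 3) := by
    rintro ⟨ha, hb⟩
    exact h3 (Prod.ext (Fin.ext (by rw [ha, val2 hn])) (Fin.ext (by rw [hb, val3 hn])))
  exact ⟨by omega, h2, by omega, by omega, hne⟩

lemma Pext {p p' : PIdx n} (h1 : (p.1.1 : ℕ) = (p'.1.1 : ℕ))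
    (h2 : (p.1.2 : ℕ) = (p'.1.2 : ℕ)) : p = p' :=
  Subtype.ext (Prod.ext (Fin.ext h1) (Fin.ext h2))

def P12 (hn : 4 ≤ n) : PIdx n :=
  ⟨((1 : Fin (n+1)), (2 : Fin (n+1))),
    show (0 : Fin (n+1)) < 1 by rw [Fin.lt_def, Fin.val_zero, val1 hn]; omega,
    show (1 : Fin (n+1)) < 2 by rw [Fin.lt_def, val1 hn, val2 hn]; omega⟩
def P13 (hn : 4 ≤ n) : PIdx n :=
  ⟨((1 : Fin (n+1)), (3 : Fin (n+1))),
    show (0 : Fin (n+1)) < 1 by rw [Fin.lt_def, Fin.val_zero, val1 hn]; omega,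
    show (1 : Fin (n+1)) < 3 by rw [Fin.lt_def, val1 hn, val3 hn]; omega⟩
def P23 (hn : 4 ≤ n) : PIdx n :=
  ⟨((2 : Fin (n+1)), (3 : Fin (n+1))),
    show (0 : Fin (n+1)) < 2 by rw [Fin.lt_def, Fin.val_zero, val2 hn]; omega,
    show (2 : Fin (n+1)) < 3 by rw [Fin.lt_def, val2 hn, val3 hn]; omega⟩
def P1a (hn : 4 ≤ n) (q : EIdx n) : PIdx n :=
  ⟨((1 : Fin (n+1)), q.1.1),
    show (0 : Fin (n+1)) < 1 by rw [Fin.lt_def, Fin.val_zero, val1 hn]; omega,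
    show (1 : Fin (n+1)) < q.1.1 by
      rw [Fin.lt_def, val1 hn]; have := (Efacts hn q).1; omega⟩
def P1b (hn : 4 ≤ n) (q : EIdx n) : PIdx n :=
  ⟨((1 : Fin (n+1)), q.1.2),
    show (0 : Fin (n+1)) < 1 by rw [Fin.lt_def, Fin.val_zero, val1 hn]; omega,
    show (1 : Fin (n+1)) < q.1.2 by
      rw [Fin.lt_def, val1 hn]; have := (Efacts hn q).2.2.2.1; omega⟩

@[simp] lemma P12_fst (hn : 4 ≤ n) : ((P12 hn).1.1 : ℕ) = 1 := val1 hn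
@[simp] lemma P12_snd (hn : 4 ≤ n) : ((P12 hn).1.2 : ℕ) = 2 := val2 hn
@[simp] lemma P13_fst (hn : 4 ≤ n) : ((P13 hn).1.1 : ℕ) = 1 := val1 hn
@[simp] lemma P13_snd (hn : 4 ≤ n) : ((P13 hn).1.2 : ℕ) = 3 := val3 hn
@[simp] lemma P23_fst (hn : 4 ≤ n) : ((P23 hn).1.1 : ℕ) = 2 := val2 hn
@[simp] lemma P23_snd (hn : 4 ≤ n) : ((P23 hn).1.2 : ℕ) = 3 := val3 hn

set_option maxHeartbeats 2000000 in
lemma Dmat_decomp (hn : 4 ≤ n) (q : EIdx n) (p : PIdx n) :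
    Dmat n q p =
      (if p = EtoP n q then 1 else 0)
      + (if (q.1.1 : ℕ) = 2 then 0 else if p = P12 hn then 1 else 0)
      + (if (q.1.1 : ℕ) = 3 then 0 else if p = P13 hn then 1 else 0)
      - (if p = P23 hn then 1 else 0)
      - (if (q.1.1 : ℕ) = 2 ∨ (q.1.1 : ℕ) = 3 then 0
         else if p = P1a hn q then 1 else 0)
      - (if p = P1b hn q then 1 else 0) := by
  obtain ⟨ha, hab, hbn, hb4, hne⟩ := Efacts hn q
  obtain ⟨⟨x, y⟩, hp⟩ := p
  obtain ⟨hp1, hp2⟩ := hp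
  rw [Fin.lt_def] at hp1 hp2
  rw [Fin.val_zero] at hp1
  simp only [Dmat, EtoP, P12, P13, P23, P1a, P1b, Subtype.mk.injEq, Prod.mk.injEq,
    Prod.ext_iff, Fin.ext_iff, val1 hn, val2 hn, val3 hn, ne_eq]
  split_ifs <;> omega

lemma Dmat_delta (hn : 4 ≤ n) (q q' : EIdx n) :
    Dmat n q (EtoP n q') = if q = q' then 1 else 0 := by
  obtain ⟨ha, hab, hbn, hb4, hne⟩ := Efacts hn q
  obtain ⟨ha', hab', hbn', hb4', hne'⟩ := Efacts hn q'
  simp only [Dmat, EtoP, Subtype.ext_iff, Prod.ext_iff, Fin.ext_iff,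
    val1 hn, val2 hn, val3 hn, ne_eq]
  split_ifs <;> omega

lemma Amat_apply (i : Fin n) (p : PIdx n) :
    Amat n i p = (if (p.1.1 : ℕ) = (i : ℕ) + 1 then 1 else 0)
      + (if (p.1.2 : ℕ) = (i : ℕ) + 1 then 1 else 0) := by
  simp only [Amat, Fin.ext_iff, Fin.val_succ]

lemma sum_mul_ite (f : PIdx n → ℤ) (c : PIdx n) :
    ∑ p : PIdx n, f p * (if p = c then (1:ℤ) else 0) = f c := by
  rw [Finset.sum_congr rfl (fun p _ =>
    (by rw [mul_ite, mul_one, mul_zero] :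
      f p * (if p = c then (1:ℤ) else 0) = if p = c then f p else 0)),
    Finset.sum_ite_eq' Finset.univ c f]
  simp

set_option maxHeartbeats 1000000 in
lemma ADt (hn : 4 ≤ n) : Amat n * (Dmat n).transpose = 0 := by
  ext i q
  rw [Matrix.mul_apply, Matrix.zero_apply]
  simp only [Matrix.transpose_apply]
  obtain ⟨ha, hab, hbn, hb4, hne⟩ := Efacts hn q
  by_cases h2 : (q.1.1 : ℕ) = 2
  · simp only [Dmat_decomp hn q, eq_true h2,
      eq_false (show ¬((q.1.1 : ℕ) = 3) by omega), if_true, if_false, true_or,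
      mul_add, mul_sub, mul_zero, add_zero, sub_zero,
      Finset.sum_add_distrib, Finset.sum_sub_distrib]
    rw [sum_mul_ite (Amat n i) (EtoP n q), sum_mul_ite (Amat n i) (P13 hn),
      sum_mul_ite (Amat n i) (P23 hn), sum_mul_ite (Amat n i) (P1b hn q)]
    simp only [Amat_apply, EtoP, P13_fst hn, P13_snd hn, P23_fst hn, P23_snd hn,
      P1b, val1 hn, val2 hn, val3 hn, h2]
    split_ifs <;> omega
  · by_cases h3 : (q.1.1 : ℕ) = 3
    · simp only [Dmat_decomp hn q, eq_true h3, eq_false h2, if_true, if_false,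
        or_true, mul_add, mul_sub, mul_zero, add_zero, sub_zero,
        Finset.sum_add_distrib, Finset.sum_sub_distrib]
      rw [sum_mul_ite (Amat n i) (EtoP n q), sum_mul_ite (Amat n i) (P12 hn),
        sum_mul_ite (Amat n i) (P23 hn), sum_mul_ite (Amat n i) (P1b hn q)]
      simp only [Amat_apply, EtoP, P12_fst hn, P12_snd hn, P23_fst hn, P23_snd hn,
        P1b, val1 hn, val2 hn, val3 hn, h3]
      split_ifs <;> omega
    · simp only [Dmat_decomp hn q, eq_false h2, eq_false h3,
        false_or, if_false, mul_add, mul_sub,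
        Finset.sum_add_distrib, Finset.sum_sub_distrib]
      rw [sum_mul_ite (Amat n i) (EtoP n q), sum_mul_ite (Amat n i) (P12 hn),
        sum_mul_ite (Amat n i) (P13 hn), sum_mul_ite (Amat n i) (P23 hn),
        sum_mul_ite (Amat n i) (P1a hn q), sum_mul_ite (Amat n i) (P1b hn q)]
      simp only [Amat_apply, EtoP, P12_fst hn, P12_snd hn, P13_fst hn, P13_snd hn,
        P23_fst hn, P23_snd hn, P1a, P1b, val1 hn, val2 hn, val3 hn]
      split_ifs <;> omega

lemma P12_ne_P13 (hn : 4 ≤ n) : P12 hn ≠ P13 hn := by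
  intro h
  have := congrArg (fun r : PIdx n => (r.1.2 : ℕ)) h
  simp only [P12_snd hn, P13_snd hn] at this
  omega
lemma P12_ne_P23 (hn : 4 ≤ n) : P12 hn ≠ P23 hn := by
  intro h
  have := congrArg (fun r : PIdx n => (r.1.2 : ℕ)) h
  simp only [P12_snd hn, P23_snd hn] at this
  omega
lemma P13_ne_P23 (hn : 4 ≤ n) : P13 hn ≠ P23 hn := by
  intro h
  have := congrArg (fun r : PIdx n => (r.1.1 : ℕ)) h
  simp only [P13_fst hn, P23_fst hn] at this
  omega

set_option maxHeartbeats 2000000 in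
lemma key (hn : 4 ≤ n) (w : PIdx n → ℤ) (hw : (Amat n).mulVecLin w = 0)
    (hq : ∀ q : EIdx n, w (EtoP n q) = 0) : w = 0 := by
  have hrow : ∀ i : Fin n, ∑ p : PIdx n, Amat n i p * w p = 0 := by
    intro i
    have := congrFun hw i
    simpa [Matrix.mulVecLin_apply, Matrix.mulVec, dotProduct] using this
  -- entries in the E block vanish
  have hE' : ∀ p : PIdx n, 1 < (p.1.1 : ℕ) →
      ¬((p.1.1 : ℕ) = 2 ∧ (p.1.2 : ℕ) = 3) → w p = 0 := by
    intro p h1 hne23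
    have hne : p.1 ≠ ((2 : Fin (n+1)), (3 : Fin (n+1))) := by
      intro h
      refine hne23 ⟨?_, ?_⟩ <;> rw [h]
      · exact val2 hn
      · exact val3 hn
    have hlt1 : (1 : Fin (n+1)) < p.1.1 := by rw [Fin.lt_def, val1 hn]; omega
    have := hq ⟨p.1, hlt1, p.2.2, hne⟩
    rwa [show EtoP n ⟨p.1, hlt1, p.2.2, hne⟩ = p from Subtype.ext rfl] at this
  -- columns (1, l) with l ≥ 4 vanish
  have h1l : ∀ p : PIdx n, (p.1.1 : ℕ) = 1 → 4 ≤ (p.1.2 : ℕ) → w p = 0 := by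
    intro p hp1 hp4
    have hpn : (p.1.2 : ℕ) ≤ n := by have := p.1.2.isLt; omega
    have h := hrow ⟨(p.1.2 : ℕ) - 1, by omega⟩
    set i : Fin n := ⟨(p.1.2 : ℕ) - 1, by omega⟩ with hi
    have hiv : (i : ℕ) + 1 = (p.1.2 : ℕ) := by simp [hi]; omega
    have heq : ∀ p' : PIdx n, Amat n i p' * w p' = if p' = p then w p' else 0 := by
      intro p'
      have hp'1 := p'.2.1
      have hp'2 := p'.2.2
      rw [Fin.lt_def] at hp'1 hp'2
      rw [Fin.val_zero] at hp'1
      by_cases he : p' = p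
      · subst he
        rw [if_pos rfl, Amat_apply, if_neg (by omega), if_pos (by omega)]
        ring
      · rw [if_neg he, Amat_apply]
        by_cases hA1 : (p'.1.1 : ℕ) = (i : ℕ) + 1
        · rw [hE' p' (by omega) (by omega), mul_zero]
        · by_cases hA2 : (p'.1.2 : ℕ) = (i : ℕ) + 1
          · by_cases hx : (p'.1.1 : ℕ) = 1
            · exact absurd (Pext (by omega) (by omega)) he
            · rw [hE' p' (by omega) (by omega), mul_zero]
          · rw [if_neg hA1, if_neg hA2]; ring
    rw [Finset.sum_congr rfl (fun p' _ => heq p')] at h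
    rw [Finset.sum_ite_eq' Finset.univ p w] at h
    simpa using h
  -- all columns outside {P12, P13, P23} vanish
  have hsupp : ∀ p : PIdx n, p ≠ P12 hn → p ≠ P13 hn → p ≠ P23 hn → w p = 0 := by
    intro p h12 h13 h23
    have hp1 := p.2.1
    have hp2 := p.2.2
    rw [Fin.lt_def] at hp1 hp2
    rw [Fin.val_zero] at hp1
    have e12 : ¬((p.1.1 : ℕ) = 1 ∧ (p.1.2 : ℕ) = 2) := fun h =>
      h12 (Pext (by rw [h.1, P12_fst hn]) (by rw [h.2, P12_snd hn]))
    have e13 : ¬((p.1.1 : ℕ) = 1 ∧ (p.1.2 : ℕ) = 3) := fun h =>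
      h13 (Pext (by rw [h.1, P13_fst hn]) (by rw [h.2, P13_snd hn]))
    have e23 : ¬((p.1.1 : ℕ) = 2 ∧ (p.1.2 : ℕ) = 3) := fun h =>
      h23 (Pext (by rw [h.1, P23_fst hn]) (by rw [h.2, P23_snd hn]))
    by_cases hx : (p.1.1 : ℕ) = 1
    · exact h1l p hx (by omega)
    · exact hE' p (by omega) e23
  -- the three row equations for rows 1, 2, 3
  have hsum : ∀ i : Fin n,
      Amat n i (P12 hn) * w (P12 hn) + Amat n i (P13 hn) * w (P13 hn)
        + Amat n i (P23 hn) * w (P23 hn) = 0 := by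
    intro i
    have h := hrow i
    have heq : ∀ p' : PIdx n, Amat n i p' * w p' =
        (if p' = P12 hn then Amat n i (P12 hn) * w (P12 hn) else 0)
        + (if p' = P13 hn then Amat n i (P13 hn) * w (P13 hn) else 0)
        + (if p' = P23 hn then Amat n i (P23 hn) * w (P23 hn) else 0) := by
      intro p'
      by_cases h12 : p' = P12 hn
      · subst h12
        rw [if_pos rfl, if_neg (P12_ne_P13 hn), if_neg (P12_ne_P23 hn)]; ring
      · by_cases h13 : p' = P13 hn
        · subst h13
          rw [if_neg h12, if_pos rfl, if_neg (P13_ne_P23 hn)]; ring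
        · by_cases h23 : p' = P23 hn
          · subst h23
            rw [if_neg h12, if_neg h13, if_pos rfl]; ring
          · rw [if_neg h12, if_neg h13, if_neg h23,
              hsupp p' h12 h13 h23, mul_zero]; ring
    rw [Finset.sum_congr rfl (fun p' _ => heq p')] at h
    rw [Finset.sum_add_distrib, Finset.sum_add_distrib,
      Finset.sum_ite_eq' Finset.univ, Finset.sum_ite_eq' Finset.univ,
      Finset.sum_ite_eq' Finset.univ] at h
    simpa using h
  obtain ⟨i1, hi1⟩ : ∃ i : Fin n, (i : ℕ) = 0 := ⟨⟨0, by omega⟩, rfl⟩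
  obtain ⟨i2, hi2⟩ : ∃ i : Fin n, (i : ℕ) = 1 := ⟨⟨1, by omega⟩, rfl⟩
  obtain ⟨i3, hi3⟩ : ∃ i : Fin n, (i : ℕ) = 2 := ⟨⟨2, by omega⟩, rfl⟩
  have hr1 := hsum i1
  have hr2 := hsum i2
  have hr3 := hsum i3
  simp only [Amat_apply, P12_fst hn, P12_snd hn, P13_fst hn, P13_snd hn,
    P23_fst hn, P23_snd hn, hi1] at hr1
  simp only [Amat_apply, P12_fst hn, P12_snd hn, P13_fst hn, P13_snd hn,
    P23_fst hn, P23_snd hn, hi2] at hr2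
  simp only [Amat_apply, P12_fst hn, P12_snd hn, P13_fst hn, P13_snd hn,
    P23_fst hn, P23_snd hn, hi3] at hr3
  norm_num at hr1 hr2 hr3
  -- now conclude
  funext p
  simp only [Pi.zero_apply]
  by_cases h12 : p = P12 hn
  · subst h12; omega
  · by_cases h13 : p = P13 hn
    · subst h13; omega
    · by_cases h23 : p = P23 hn
      · subst h23; omega
      · exact hsupp p h12 h13 h23

lemma vecMul_apply_EtoP (hn : 4 ≤ n) (v : EIdx n → ℤ) (q : EIdx n) :
    Matrix.vecMul v (Dmat n) (EtoP n q) = v q := by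
  simp only [Matrix.vecMul, dotProduct,
    Dmat_delta hn, mul_ite, mul_one, mul_zero, Finset.sum_ite_eq',
    Finset.mem_univ, if_true]

end St5

/-- The rows of `D` form a ℤ-basis of `{u ∈ ℤ^P : A_n u = 0}`; in
particular `A_n · Dᵀ = 0`, and the square submatrix of `D` on the columns indexed by
`ℰ` is the identity. -/
theorem Dmat_rows_basis_of_ker_Amat (n : ℕ) (hn : 4 ≤ n) :
    Function.Injective (Dmat n).vecMulLinear ∧
    LinearMap.range (Dmat n).vecMulLinear = LinearMap.ker (Amat n).mulVecLin ∧
    Amat n * (Dmat n).transpose = 0 ∧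
    (∀ q q' : EIdx n, Dmat n q (EtoP n q') = if q = q' then 1 else 0) := by
  refine ⟨?_, ?_, St5.ADt hn, St5.Dmat_delta hn⟩
  · intro v v' h
    rw [Matrix.vecMulLinear_apply, Matrix.vecMulLinear_apply] at h
    funext q
    rw [← St5.vecMul_apply_EtoP hn v q, ← St5.vecMul_apply_EtoP hn v' q, h]
  · apply le_antisymm
    · rintro u ⟨v, rfl⟩
      rw [LinearMap.mem_ker, Matrix.mulVecLin_apply, Matrix.vecMulLinear_apply,
        ← Matrix.mulVec_transpose, Matrix.mulVec_mulVec, St5.ADt hn,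
        Matrix.zero_mulVec]
    · intro u hu
      rw [LinearMap.mem_ker] at hu
      refine ⟨fun q => u (EtoP n q), ?_⟩
      have h0 : (Dmat n).vecMulLinear (fun q => u (EtoP n q)) - u = 0 := by
        apply St5.key hn
        · rw [map_sub, hu, sub_zero, Matrix.mulVecLin_apply,
            Matrix.vecMulLinear_apply, ← Matrix.mulVec_transpose,
            Matrix.mulVec_mulVec, St5.ADt hn, Matrix.zero_mulVec]
        · intro q
          simp [Matrix.vecMulLinear_apply, St5.vecMul_apply_EtoP hn]
      have := sub_eq_zero.mp h0
      exact this
end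

section
/- With d_{kl} ∈ ℤ^ℰ the column of D indexed by (k,l) ∈ P: (i) the sum of all columns of D is zero, that is ∑_{(k,l)∈P} d_{kl} = 0; and (ii) for every I ∈ 𝓘 one has ∑_{(k,l)∈P, {k,l}⊆I} d_{kl} = ∑_{(k,l)∈P, {k,l}⊆[n]∖I} d_{kl} = r_I. -/
/-- The set `[n] = {1, …, n}` inside `Fin (n+1)`. -/
def lab (n : ℕ) : Finset (Fin (n + 1)) := Finset.univ.filter (fun i => 0 < i)

/-- `I ∈ 𝓘`: `I ⊆ [n]`, `1 ∈ I`, `|I| ≥ 2` and `|[n] ∖ I| ≥ 2`. -/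
abbrev isI (n : ℕ) (I : Finset (Fin (n + 1))) : Prop :=
  (1 : Fin (n + 1)) ∈ I ∧ I ⊆ lab n ∧ 2 ≤ I.card ∧ 2 ≤ (lab n \ I).card

/-- The vector `r_I ∈ ℤ^ℰ`: the entry at `(i,j)` is `1` if `I ∩ {i,j} = ∅` and
`I ∩ {2,3} ≠ ∅`; `-1` if `I ∩ {i,j} ≠ ∅` and `I ∩ {2,3} = ∅`; and `0` otherwise. -/
def rvec (n : ℕ) (I : Finset (Fin (n + 1))) : EIdx n → ℤ := fun q =>
  if q.val.1 ∉ I ∧ q.val.2 ∉ I then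
    (if (2 : Fin (n + 1)) ∈ I ∨ (3 : Fin (n + 1)) ∈ I then 1 else 0)
  else
    (if ¬((2 : Fin (n + 1)) ∈ I ∨ (3 : Fin (n + 1)) ∈ I) then -1 else 0)

/- ------------------ auxiliary lemmas ------------------ -/

lemma fval1 (n : ℕ) (hn : 4 ≤ n) : ((1 : Fin (n+1)) : ℕ) = 1 := by
  have := Fin.val_cast_of_lt (n := n+1) (a := 1) (by omega); simpa using this
lemma fval2 (n : ℕ) (hn : 4 ≤ n) : ((2 : Fin (n+1)) : ℕ) = 2 := by
  have := Fin.val_cast_of_lt (n := n+1) (a := 2) (by omega); simpa using this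
lemma fval3 (n : ℕ) (hn : 4 ≤ n) : ((3 : Fin (n+1)) : ℕ) = 3 := by
  have := Fin.val_cast_of_lt (n := n+1) (a := 3) (by omega); simpa using this

set_option maxHeartbeats 2000000 in
lemma key0 (i j a b : ℕ) (hi : 1 < i) (hij : i < j) (hne : ¬(i = 2 ∧ j = 3))
    (ha : 0 < a) (hab : a < b) :
  (if (a = i ∧ b = j) then (1:ℤ)
   else if (((a=1∧b=2)∨(a=1∧b=3)) ∧ ¬a=i ∧ ¬a=j ∧ ¬b=i ∧ ¬b=j) then 1
   else if (a=2∧b=3) then -1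
   else if (((a=1∧b=i)∨(a=1∧b=j)) ∧ ¬a=2 ∧ ¬a=3 ∧ ¬b=2 ∧ ¬b=3) then -1
   else 0)
  = (if a=i∧b=j then 1 else 0)
  + (if a=1∧b=2 then (if ¬i=2∧¬j=2 then (1:ℤ) else 0) else 0)
  + (if a=1∧b=3 then (if ¬i=3∧¬j=3 then (1:ℤ) else 0) else 0)
  + (if a=2∧b=3 then -1 else 0)
  + (if a=1∧b=i then (if ¬i=2∧¬i=3 then (-1:ℤ) else 0) else 0)
  + (if a=1∧b=j then (if ¬j=2∧¬j=3 then (-1:ℤ) else 0) else 0) := by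
  split_ifs <;> omega

lemma Dmat_eq (n : ℕ) (hn : 4 ≤ n) (e : EIdx n) (p : PIdx n) :
  Dmat n e p =
    (if p.val = e.val then 1 else 0)
  + (if p.val = ((1 : Fin (n+1)), (2 : Fin (n+1))) then
       (if e.val.1 ≠ 2 ∧ e.val.2 ≠ 2 then (1:ℤ) else 0) else 0)
  + (if p.val = ((1 : Fin (n+1)), (3 : Fin (n+1))) then
       (if e.val.1 ≠ 3 ∧ e.val.2 ≠ 3 then (1:ℤ) else 0) else 0)
  + (if p.val = ((2 : Fin (n+1)), (3 : Fin (n+1))) then -1 else 0)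
  + (if p.val = ((1 : Fin (n+1)), e.val.1) then
       (if e.val.1 ≠ 2 ∧ e.val.1 ≠ 3 then (-1:ℤ) else 0) else 0)
  + (if p.val = ((1 : Fin (n+1)), e.val.2) then
       (if e.val.2 ≠ 2 ∧ e.val.2 ≠ 3 then (-1:ℤ) else 0) else 0) := by
  obtain ⟨⟨i, j⟩, hi, hij, hne⟩ := e
  obtain ⟨⟨a, b⟩, ha, hab⟩ := p
  simp only [ne_eq, Fin.lt_def, Prod.mk.injEq, Fin.ext_iff, Fin.val_zero,
    fval1 n hn, fval2 n hn, fval3 n hn] at hi hij hne ha hab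
  simp only [Dmat, Prod.ext_iff, Prod.mk.injEq, ne_eq, Fin.ext_iff,
    fval1 n hn, fval2 n hn, fval3 n hn]
  exact key0 i.val j.val a.val b.val hi hij hne ha hab

lemma lt01 (n : ℕ) (hn : 4 ≤ n) : (0 : Fin (n+1)) < 1 := by
  rw [Fin.lt_def, Fin.val_zero, fval1 n hn]; omega
lemma lt02 (n : ℕ) (hn : 4 ≤ n) : (0 : Fin (n+1)) < 2 := by
  rw [Fin.lt_def, Fin.val_zero, fval2 n hn]; omega
lemma lt12 (n : ℕ) (hn : 4 ≤ n) : (1 : Fin (n+1)) < 2 := by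
  rw [Fin.lt_def, fval1 n hn, fval2 n hn]; omega
lemma lt13 (n : ℕ) (hn : 4 ≤ n) : (1 : Fin (n+1)) < 3 := by
  rw [Fin.lt_def, fval1 n hn, fval3 n hn]; omega
lemma lt23 (n : ℕ) (hn : 4 ≤ n) : (2 : Fin (n+1)) < 3 := by
  rw [Fin.lt_def, fval2 n hn, fval3 n hn]; omega

lemma sum_Dmat (n : ℕ) (hn : 4 ≤ n) (e : EIdx n) (S : Finset (PIdx n)) :
    ∑ p ∈ S, Dmat n e p =
      (if (⟨e.val, lt_trans (lt01 n hn) e.2.1, e.2.2.1⟩ : PIdx n) ∈ S then 1 else 0)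
    + (if (⟨((1 : Fin (n+1)), (2 : Fin (n+1))), lt01 n hn, lt12 n hn⟩ : PIdx n) ∈ S then
         (if e.val.1 ≠ 2 ∧ e.val.2 ≠ 2 then (1:ℤ) else 0) else 0)
    + (if (⟨((1 : Fin (n+1)), (3 : Fin (n+1))), lt01 n hn, lt13 n hn⟩ : PIdx n) ∈ S then
         (if e.val.1 ≠ 3 ∧ e.val.2 ≠ 3 then (1:ℤ) else 0) else 0)
    + (if (⟨((2 : Fin (n+1)), (3 : Fin (n+1))), lt02 n hn, lt23 n hn⟩ : PIdx n) ∈ S then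
         (-1) else 0)
    + (if (⟨((1 : Fin (n+1)), e.val.1), lt01 n hn, e.2.1⟩ : PIdx n) ∈ S then
         (if e.val.1 ≠ 2 ∧ e.val.1 ≠ 3 then (-1:ℤ) else 0) else 0)
    + (if (⟨((1 : Fin (n+1)), e.val.2), lt01 n hn, lt_trans e.2.1 e.2.2.1⟩ : PIdx n) ∈ S then
         (if e.val.2 ≠ 2 ∧ e.val.2 ≠ 3 then (-1:ℤ) else 0) else 0) := by
  have hsum : ∀ (v : Fin (n+1) × Fin (n+1)) (hv : 0 < v.1 ∧ v.1 < v.2) (c : ℤ),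
      (∑ p ∈ S, if p.val = v then c else 0) = if (⟨v, hv⟩ : PIdx n) ∈ S then c else 0 := by
    intro v hv c
    rw [← Finset.sum_ite_eq' S (⟨v, hv⟩ : PIdx n) (fun _ => c)]
    exact Finset.sum_congr rfl fun p _ => by simp [Subtype.ext_iff]
  calc ∑ p ∈ S, Dmat n e p = _ := Finset.sum_congr rfl fun p _ => Dmat_eq n hn e p
    _ = _ := by
        rw [Finset.sum_add_distrib, Finset.sum_add_distrib, Finset.sum_add_distrib,
          Finset.sum_add_distrib, Finset.sum_add_distrib,
          hsum e.val ⟨lt_trans (lt01 n hn) e.2.1, e.2.2.1⟩,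
          hsum ((1 : Fin (n+1)), (2 : Fin (n+1))) ⟨lt01 n hn, lt12 n hn⟩,
          hsum ((1 : Fin (n+1)), (3 : Fin (n+1))) ⟨lt01 n hn, lt13 n hn⟩,
          hsum ((2 : Fin (n+1)), (3 : Fin (n+1))) ⟨lt02 n hn, lt23 n hn⟩,
          hsum ((1 : Fin (n+1)), e.val.1) ⟨lt01 n hn, e.2.1⟩,
          hsum ((1 : Fin (n+1)), e.val.2) ⟨lt01 n hn, lt_trans e.2.1 e.2.2.1⟩]

set_option maxHeartbeats 1000000 in
lemma key1 (i j : ℕ) (hi : 1 < i) (hij : i < j) (hne : ¬(i = 2 ∧ j = 3)) :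
    (1:ℤ) + (if ¬i=2 ∧ ¬j=2 then (1:ℤ) else 0) + (if ¬i=3 ∧ ¬j=3 then (1:ℤ) else 0)
    + (-1) + (if ¬i=2 ∧ ¬i=3 then (-1:ℤ) else 0) + (if ¬j=2 ∧ ¬j=3 then (-1:ℤ) else 0) = 0 := by
  split_ifs <;> omega

set_option maxHeartbeats 1000000 in
lemma key2 (i j : ℕ) (mi mj m2 m3 : Prop) [Decidable mi] [Decidable mj]
    [Decidable m2] [Decidable m3]
    (hi : 1 < i) (hij : i < j) (hne : ¬(i = 2 ∧ j = 3))
    (c1 : i = 2 → (mi ↔ m2)) (c2 : i = 3 → (mi ↔ m3))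
    (c3 : j = 2 → (mj ↔ m2)) (c4 : j = 3 → (mj ↔ m3)) :
    (if mi ∧ mj then (1:ℤ) else 0)
    + (if m2 then (if ¬i=2 ∧ ¬j=2 then (1:ℤ) else 0) else 0)
    + (if m3 then (if ¬i=3 ∧ ¬j=3 then (1:ℤ) else 0) else 0)
    + (if m2 ∧ m3 then (-1:ℤ) else 0)
    + (if mi then (if ¬i=2 ∧ ¬i=3 then (-1:ℤ) else 0) else 0)
    + (if mj then (if ¬j=2 ∧ ¬j=3 then (-1:ℤ) else 0) else 0)
    = (if ¬mi ∧ ¬mj then (if m2 ∨ m3 then (1:ℤ) else 0)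
       else (if ¬(m2 ∨ m3) then (-1:ℤ) else 0)) := by
  by_cases hmi : mi <;> by_cases hmj : mj <;> by_cases hm2 : m2 <;> by_cases hm3 : m3 <;>
    simp_all <;> split_ifs <;> omega

lemma key3 (mi mj m2 m3 : Prop) [Decidable mi] [Decidable mj] [Decidable m2] [Decidable m3] :
    (if ¬mi ∧ ¬mj then (1:ℤ) else 0) + (if ¬m2 ∧ ¬m3 then (-1:ℤ) else 0)
    = (if ¬mi ∧ ¬mj then (if m2 ∨ m3 then (1:ℤ) else 0)
       else (if ¬(m2 ∨ m3) then (-1:ℤ) else 0)) := by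
  split_ifs <;> tauto

/- ------------------ main theorem ------------------ -/

/-- (i) The sum of all columns of `D` is zero; (ii) for every
`I ∈ 𝓘`, the sum of the columns `d_{kl}` with `{k,l} ⊆ I` equals `r_I` and so does
the sum of the columns `d_{kl}` with `{k,l} ⊆ [n] ∖ I`. -/
theorem Dmat_column_sums (n : ℕ) (hn : 4 ≤ n) :
    (∀ e : EIdx n, ∑ p : PIdx n, Dmat n e p = 0) ∧
    ∀ I : Finset (Fin (n + 1)), isI n I →
      (∀ e : EIdx n,
        ∑ p ∈ Finset.univ.filter (fun p : PIdx n => p.val.1 ∈ I ∧ p.val.2 ∈ I),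
          Dmat n e p = rvec n I e) ∧
      (∀ e : EIdx n,
        ∑ p ∈ Finset.univ.filter (fun p : PIdx n => p.val.1 ∉ I ∧ p.val.2 ∉ I),
          Dmat n e p = rvec n I e) := by
  have hfacts : ∀ e : EIdx n, 1 < (e.val.1 : ℕ) ∧ (e.val.1 : ℕ) < (e.val.2 : ℕ) ∧
      ¬((e.val.1 : ℕ) = 2 ∧ (e.val.2 : ℕ) = 3) := by
    intro e
    obtain ⟨⟨i, j⟩, hi, hij, hne⟩ := e
    simp only [ne_eq, Fin.lt_def, Prod.mk.injEq, Fin.ext_iff,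
      fval1 n hn, fval2 n hn, fval3 n hn] at hi hij hne
    exact ⟨hi, hij, hne⟩
  refine ⟨?_, ?_⟩
  · intro e
    obtain ⟨h1, h2, h3⟩ := hfacts e
    rw [sum_Dmat n hn e Finset.univ]
    simp only [Finset.mem_univ, if_true, ne_eq, Fin.ext_iff, fval2 n hn, fval3 n hn]
    exact key1 _ _ h1 h2 h3
  · intro I hI
    obtain ⟨h1I, -, -, -⟩ := hI
    constructor
    · intro e
      obtain ⟨h1, h2, h3⟩ := hfacts e
      have c1 : (e.val.1 : ℕ) = 2 → (e.val.1 ∈ I ↔ (2 : Fin (n+1)) ∈ I) := by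
        intro h
        have : e.val.1 = (2 : Fin (n+1)) := Fin.ext (by rw [fval2 n hn]; exact h)
        rw [this]
      have c2 : (e.val.1 : ℕ) = 3 → (e.val.1 ∈ I ↔ (3 : Fin (n+1)) ∈ I) := by
        intro h
        have : e.val.1 = (3 : Fin (n+1)) := Fin.ext (by rw [fval3 n hn]; exact h)
        rw [this]
      have c3 : (e.val.2 : ℕ) = 2 → (e.val.2 ∈ I ↔ (2 : Fin (n+1)) ∈ I) := by
        intro h
        have : e.val.2 = (2 : Fin (n+1)) := Fin.ext (by rw [fval2 n hn]; exact h)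
        rw [this]
      have c4 : (e.val.2 : ℕ) = 3 → (e.val.2 ∈ I ↔ (3 : Fin (n+1)) ∈ I) := by
        intro h
        have : e.val.2 = (3 : Fin (n+1)) := Fin.ext (by rw [fval3 n hn]; exact h)
        rw [this]
      rw [sum_Dmat n hn e]
      simp only [Finset.mem_filter, Finset.mem_univ, true_and, h1I, rvec, ne_eq,
        Fin.ext_iff, fval2 n hn, fval3 n hn]
      exact key2 _ _ _ _ _ _ h1 h2 h3 c1 c2 c3 c4
    · intro e
      rw [sum_Dmat n hn e]
      simp only [Finset.mem_filter, Finset.mem_univ, true_and, h1I, rvec, ne_eq,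
        not_true_eq_false, false_and, if_false, and_false]
      have := key3 (e.val.1 ∈ I) (e.val.2 ∈ I) ((2 : Fin (n+1)) ∈ I) ((3 : Fin (n+1)) ∈ I)
      linarith [this]
end

section
/- Let G be a finite tree (a finite connected acyclic simple graph) and let 𝒫 be a finite family of paths in G such that any two paths in 𝒫 share at least one vertex. Then there exists a vertex of G that lies on every path in 𝒫. -/
namespace HellyTreeAux

open SimpleGraph

variable {V : Type*} {G : SimpleGraph V}

/-- Appending two paths that only share the middle vertex yields a path. -/
lemma isPath_append {u v w : V} {p : G.Walk u v} {q : G.Walk v w}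
    (hp : p.IsPath) (hq : q.IsPath) (h : ∀ x, x ∈ p.support → x ∈ q.support → x = v) :
    (p.append q).IsPath := by
  rw [Walk.isPath_def, Walk.support_append]
  have hq' : q.support = v :: q.support.tail := q.support_eq_cons
  have hqn : (v :: q.support.tail).Nodup := by rw [← hq']; exact hq.support_nodup
  refine List.Nodup.append hp.support_nodup (List.nodup_cons.mp hqn).2 ?_
  intro x hxp hxq
  have hx' : x ∈ q.support := by rw [hq']; exact List.mem_cons_of_mem _ hxq
  have hxv := h x hxp hx'
  subst hxv
  exact (List.nodup_cons.mp hqn).1 hxq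

/-- In an acyclic graph, paths between two fixed vertices are unique. -/
lemma walk_unique (hG : G.IsAcyclic) {u v : V} {p q : G.Walk u v}
    (hp : p.IsPath) (hq : q.IsPath) : p = q :=
  congrArg Subtype.val (hG.path_unique ⟨p, hp⟩ ⟨q, hq⟩)

/-- Along a path ending in `S`, there is a "gate": a first vertex of `S`,
together with the prefix path reaching it, which meets `S` only in that vertex. -/
lemma gate_exists [DecidableEq V] (S : Set V) {r c : V} (w : G.Walk r c) :
    w.IsPath → c ∈ S →
    ∃ m, ∃ q : G.Walk r m, q.IsPath ∧ m ∈ S ∧ q.support ⊆ w.support ∧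
      ∀ x ∈ q.support, x ∈ S → x = m := by
  classical
  induction w with
  | nil =>
    intro _ hc
    exact ⟨_, .nil, by simp, hc, by simp, by simp⟩
  | @cons u u' c h w' ih =>
    intro hw hc
    by_cases hu : u ∈ S
    · refine ⟨u, .nil, by simp, hu, ?_, by simp⟩
      intro x hx
      simp only [Walk.support_nil, List.mem_singleton] at hx
      subst hx
      exact Walk.start_mem_support _
    · obtain ⟨hw', hus⟩ := (Walk.cons_isPath_iff _ _).mp hw
      obtain ⟨m, q', hq'path, hmS, hsub, hsep⟩ := ih hw' hc
      refine ⟨m, .cons h q', ?_, hmS, ?_, ?_⟩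
      · exact hq'path.cons (fun hmem => hus (hsub hmem))
      · intro x hx
        rw [Walk.support_cons, List.mem_cons] at hx
        rw [Walk.support_cons, List.mem_cons]
        rcases hx with rfl | hx
        · exact Or.inl rfl
        · exact Or.inr (hsub hx)
      · intro x hx hxS
        rw [Walk.support_cons, List.mem_cons] at hx
        rcases hx with rfl | hx
        · exact absurd hxS hu
        · exact hsep x hx hxS

/-- Any two vertices on a path are joined by a path inside it. -/
lemma exists_path_subset [DecidableEq V] {a b u v : V} {q : G.Walk a b} (hq : q.IsPath)
    (hu : u ∈ q.support) (hv : v ∈ q.support) :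
    ∃ w : G.Walk u v, w.IsPath ∧ w.support ⊆ q.support := by
  have hspec := q.take_spec hv
  rw [← hspec, Walk.mem_support_append_iff] at hu
  cases hu with
  | inl hu =>
    refine ⟨(q.takeUntil v hv).dropUntil u hu, (hq.takeUntil hv).dropUntil hu, ?_⟩
    exact fun x hx =>
      q.support_takeUntil_subset hv ((q.takeUntil v hv).support_dropUntil_subset hu hx)
  | inr hu =>
    refine ⟨((q.dropUntil v hv).takeUntil u hu).reverse,
      ((hq.dropUntil hv).takeUntil hu).reverse, ?_⟩
    intro x hx
    rw [Walk.support_reverse, List.mem_reverse] at hx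
    exact q.support_dropUntil_subset hv ((q.dropUntil v hv).support_takeUntil_subset hu hx)

end HellyTreeAux

/-- **Helly property for paths in a tree.** Let `G` be a finite tree and
let `p` be a finite family of paths in `G` such that any two of them share a vertex.
Then there is a vertex of `G` lying on every path of the family. -/
theorem exists_common_vertex_of_pairwise_intersecting_paths_in_tree
    {V : Type*} [Fintype V] (G : SimpleGraph V) (hG : G.IsTree)
    {ι : Type*} [Fintype ι] (a b : ι → V)
    (p : ∀ i, G.Walk (a i) (b i)) (hpath : ∀ i, (p i).IsPath)
    (hmeet : ∀ i j, ∃ x, x ∈ (p i).support ∧ x ∈ (p j).support) :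
    ∃ x, ∀ i, x ∈ (p i).support := by
  classical
  open HellyTreeAux SimpleGraph in
  have hacyc : G.IsAcyclic := hG.2
  have hconn : G.Connected := hG.1
  -- root vertex
  obtain ⟨r⟩ := hconn.nonempty
  rcases isEmpty_or_nonempty ι with hι | hι
  · exact ⟨r, fun i => (IsEmpty.false i).elim⟩
  -- canonical paths from r
  have hpaths : ∀ v : V, ∃ w : G.Walk r v, w.IsPath := fun v =>
    ((hconn r v).elim fun w => ⟨w.toPath.1, w.toPath.2⟩)
  -- gates
  have hgate : ∀ i : ι, ∃ m, ∃ q : G.Walk r m, q.IsPath ∧ m ∈ (p i).support ∧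
      ∀ x ∈ q.support, x ∈ (p i).support → x = m := by
    intro i
    obtain ⟨w, hw⟩ := hpaths (a i)
    obtain ⟨m, q, h1, h2, _, h4⟩ :=
      gate_exists (G := G) {x | x ∈ (p i).support} w hw ((p i).start_mem_support)
    exact ⟨m, q, h1, h2, h4⟩
  choose m q hq hm hsep using hgate
  -- the gate lies on every path from r to a vertex of p i
  have hgate_on : ∀ i : ι, ∀ x, x ∈ (p i).support →
      ∀ (w : G.Walk r x), w.IsPath → m i ∈ w.support := by
    intro i x hx w hw
    obtain ⟨s, hs, hssub⟩ := exists_path_subset (hpath i) (hm i) hx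
    have hts : ((q i).append s).IsPath :=
      isPath_append (hq i) hs (fun y hy1 hy2 => hsep i y hy1 (hssub hy2))
    have hweq : w = (q i).append s := walk_unique hacyc hw hts
    rw [hweq, Walk.mem_support_append_iff]
    exact Or.inl ((q i).end_mem_support)
  -- pick the gate farthest from the root
  obtain ⟨i0, -, hmax⟩ := Finset.exists_max_image (Finset.univ : Finset ι)
    (fun i => (q i).length) ⟨Classical.arbitrary ι, Finset.mem_univ _⟩
  refine ⟨m i0, fun j => ?_⟩
  obtain ⟨c, hc0, hcj⟩ := hmeet i0 j
  obtain ⟨w, hw⟩ := hpaths c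
  have hm0w : m i0 ∈ w.support := hgate_on i0 c hc0 w hw
  have hmjw : m j ∈ w.support := hgate_on j c hcj w hw
  -- split w at m j
  have hspec := w.take_spec hmjw
  rw [← hspec, Walk.mem_support_append_iff] at hm0w
  cases hm0w with
  | inr h0 =>
    -- m i0 lies on the path from m j to c, which is inside p j
    obtain ⟨s, hs, hssub⟩ := exists_path_subset (hpath j) (hm j) hcj
    have : w.dropUntil (m j) hmjw = s :=
      walk_unique hacyc (hw.dropUntil hmjw) hs
    exact hssub (this ▸ h0)
  | inl h0 =>
    -- m i0 lies on the path from r to m j; by maximality m i0 = m j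
    set t := w.takeUntil (m j) hmjw with ht
    have htp : t.IsPath := hw.takeUntil hmjw
    have htqj : t = q j := walk_unique hacyc htp (hq j)
    have hspec2 := t.take_spec h0
    have ht2 : t.takeUntil (m i0) h0 = q i0 :=
      walk_unique hacyc (htp.takeUntil h0) (hq i0)
    have hlen : (q i0).length + (t.dropUntil (m i0) h0).length = (q j).length := by
      rw [← ht2, ← Walk.length_append, hspec2, htqj]
    have hle : (q j).length ≤ (q i0).length := hmax j (Finset.mem_univ j)
    have hzero : (t.dropUntil (m i0) h0).length = 0 := by omega
    have : m i0 = m j := Walk.eq_of_length_eq_zero hzero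
    rw [this]
    exact hm j
end

section
/- Let τ be a finite tree having n ≥ 2 distinguished leaves labeled 1,…,n. For a vertex w of τ, say that a pair {i,j} of labels passes through w if w lies on the unique path in τ between the leaves labeled i and j. Then for every element v of the subsemigroup of ℕ^n generated by the vectors e_i + e_j (1 ≤ i < j ≤ n), there exists a vertex w of τ such that v lies in the subsemigroup of ℕ^n generated by the vectors e_i + e_j with {i,j} passing through w. -/
/-!
Let `N = ∑ v`. If `N` is even and, for some colouring of the labels, no colour class carries
more than `N / 2`, then `v` is a sum of vectors `e_i + e_j` with `i`, `j` of different colours: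
remove one unit from a heaviest class and one from any other class, and induct. For `v` in the
submonoid generated by all `e_i + e_j`, `N` is even and every single `v_i` is at most `N / 2`.

Take `w` minimising `∑ i, v i * dist w (leaf i)` and colour each label by the branch at `w`
containing its vertex. Moving from `w` to a neighbour `a` brings the labels of branch `a` one step closer and
the others at most one step further away, so by minimality each branch carries at most `N / 2`.
Two labels in different branches are joined by a path through `w`.
-/

open Finset

section Pairing

variable {ι α : Type*}

lemma sum_add_single_add_single [DecidableEq ι] (s : Finset ι) (u : ι → ℕ) (i j : ι) :
    ∑ k ∈ s, (u + (Pi.single i 1 + Pi.single j 1) : ι → ℕ) k =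
      ∑ k ∈ s, u k + ((if i ∈ s then 1 else 0) + (if j ∈ s then 1 else 0)) := by
  simp only [Pi.add_apply, sum_add_distrib, sum_pi_single']

variable [Fintype ι]

lemma sum_sum_fiber_le [DecidableEq α] (c : ι → α) (v : ι → ℕ) (s : Finset α) :
    ∑ a ∈ s, ∑ k with c k = a, v k ≤ ∑ k, v k := by
  rw [sum_fiberwise_eq_sum_filter]
  exact sum_le_sum_of_subset (filter_subset _ _)

variable [DecidableEq ι]

lemma even_sum_and_two_mul_le_sum_of_mem_closure {v : ι → ℕ}
    (hv : v ∈ AddSubmonoid.closure {x | ∃ i j, i ≠ j ∧ x = Pi.single i 1 + Pi.single j 1}) :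
    Even (∑ k, v k) ∧ ∀ k, 2 * v k ≤ ∑ l, v l := by
  induction hv using AddSubmonoid.closure_induction with
  | mem x hx =>
    obtain ⟨i, j, hij, rfl⟩ := hx
    have h2 : ∑ l, (Pi.single i 1 + Pi.single j 1 : ι → ℕ) l = 2 := by simp [sum_add_distrib]
    refine ⟨h2 ▸ even_two, fun k => ?_⟩
    rw [h2]
    simp only [Pi.add_apply, Pi.single_apply]
    split_ifs <;> subst_vars <;> simp_all
  | zero => simp
  | add x y _ _ hx hy =>
    simp only [Pi.add_apply, sum_add_distrib]
    exact ⟨hx.1.add hy.1, fun k => by linarith [hx.2 k, hy.2 k]⟩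

variable [DecidableEq α]

lemma exists_eq_add_single_add_single_of_two_mul_sum_fiber_le (c : ι → α) (v : ι → ℕ)
    (heven : Even (∑ k, v k)) (hpos : ∑ k, v k ≠ 0)
    (hbal : ∀ a, 2 * ∑ k with c k = a, v k ≤ ∑ k, v k) :
    ∃ i j u, c i ≠ c j ∧ v = u + (Pi.single i 1 + Pi.single j 1) ∧
      ∀ a, 2 * ∑ k with c k = a, u k ≤ ∑ k, u k := by
  obtain ⟨i, hi, hmax⟩ := exists_max_image {k | v k ≠ 0} (fun k => ∑ l with c l = c k, v l) <| by
    obtain ⟨k, -, hk⟩ := exists_ne_zero_of_sum_ne_zero hpos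
    exact ⟨k, by simpa using hk⟩
  obtain ⟨j, hj, hji⟩ : ∃ j, v j ≠ 0 ∧ c j ≠ c i := by
    by_contra! h
    have : ∑ k with c k = c i, v k = ∑ k, v k := sum_filter_of_ne fun k _ hk => h k hk
    have := hbal (c i)
    omega
  rw [mem_filter] at hi
  obtain ⟨u, hu⟩ : ∃ u, u + (Pi.single i 1 + Pi.single j 1) = v := by
    refine ⟨v - (Pi.single i 1 + Pi.single j 1), funext fun k => ?_⟩
    rcases eq_or_ne k i with rfl | hki <;> rcases eq_or_ne k j with rfl | hkj <;>
      simp_all <;> omega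
  have hN : ∑ k, v k = ∑ k, u k + 2 := by
    rw [← hu, sum_add_single_add_single]
    simp
  have hM : ∀ a, ∑ k with c k = a, v k = ∑ k with c k = a, u k +
      ((if c i = a then 1 else 0) + (if c j = a then 1 else 0)) := by
    intro a
    rw [← hu, sum_add_single_add_single]
    simp
  refine ⟨i, j, u, hji.symm, hu.symm, fun a => ?_⟩
  have hMa := hM a
  have hba := hbal a
  by_cases ha : c i = a ∨ c j = a
  · rcases ha with rfl | rfl <;> simp only [hji, hji.symm, if_true, if_false] at hMa <;> omega
  push Not at ha
  rw [if_neg ha.1, if_neg ha.2] at hMa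
  -- the bound can only break for a class `a` of exactly half the mass; it is at most as heavy
  -- as the class of `i`, and together these two classes would leave nothing for `j`
  suffices 2 * ∑ k with c k = a, v k ≠ ∑ k, v k by obtain ⟨r, hr⟩ := heven; omega
  intro hhalf
  obtain ⟨k, hk, hvk⟩ := exists_ne_zero_of_sum_ne_zero (s := {k | c k = a}) (f := v) (by omega)
  have hai := (mem_filter.1 hk).2 ▸ hmax k (by simpa using hvk)
  have hj : v j ≤ ∑ k with c k = c j, v k := single_le_sum (fun _ _ => Nat.zero_le _) (by simp)
  have h3 := sum_sum_fiber_le c v {a, c i, c j}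
  rw [sum_insert (by simp [Ne.symm ha.1, Ne.symm ha.2]), sum_insert (by simp [hji.symm]),
    sum_singleton] at h3
  omega

theorem mem_closure_of_two_mul_sum_fiber_le (c : ι → α) (v : ι → ℕ) (heven : Even (∑ k, v k))
    (hbal : ∀ a, 2 * ∑ k with c k = a, v k ≤ ∑ k, v k) :
    v ∈ AddSubmonoid.closure {x | ∃ i j, c i ≠ c j ∧ x = Pi.single i 1 + Pi.single j 1} := by
  induction h : ∑ k, v k using Nat.strong_induction_on generalizing v with
  | _ N ih =>
  obtain rfl | hN := eq_or_ne N 0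
  · rw [show v = 0 from funext fun k => sum_eq_zero_iff.1 h k (mem_univ k)]
    exact zero_mem _
  obtain ⟨i, j, u, hij, rfl, hu⟩ :=
    exists_eq_add_single_add_single_of_two_mul_sum_fiber_le c v heven (h ▸ hN) hbal
  rw [sum_add_single_add_single] at h heven
  simp only [mem_univ, if_true] at h heven
  refine add_mem (ih _ (by omega) u ?_ hu rfl) (AddSubmonoid.subset_closure ⟨i, j, hij, rfl⟩)
  simpa [Nat.even_add] using heven

end Pairing

namespace SimpleGraph

variable {V ι : Type*} {G : SimpleGraph V}

lemma Walk.IsPath.reverse_append {w x y : V} {p : G.Walk w x} {q : G.Walk w y}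
    (hp : p.IsPath) (hq : q.IsPath) (h : ∀ u ∈ p.support, u ∈ q.support → u = w) :
    (p.reverse.append q).IsPath := by
  rw [Walk.isPath_def, Walk.support_append, Walk.support_reverse]
  refine List.Nodup.append (List.nodup_reverse.2 hp.support_nodup) hq.support_nodup.tail ?_
  intro u hup huq
  have hq' := hq.support_nodup
  rw [← Walk.cons_tail_support] at hq'
  exact (List.nodup_cons.1 hq').1 (h u (List.mem_reverse.1 hup) (List.mem_of_mem_tail huq) ▸ huq)

lemma IsAcyclic.isPath_reverse_append_of_snd_ne (hG : G.IsAcyclic) {w x y : V}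
    {p : G.Walk w x} {q : G.Walk w y} (hp : p.IsPath) (hq : q.IsPath) (h : p.snd ≠ q.snd) :
    (p.reverse.append q).IsPath := by
  classical
  refine hp.reverse_append hq fun u hup huq => ?_
  by_contra huw
  -- the parts of `p` and `q` up to `u` are paths from `w` to `u`, hence equal
  have := hG.subsingleton_path w u |>.elim ⟨_, hp.takeUntil hup⟩ ⟨_, hq.takeUntil huq⟩
  apply h
  rw [← Walk.snd_takeUntil huw p hup, ← Walk.snd_takeUntil huw q huq]
  exact congrArg (fun r : G.Path w u => r.1.snd) this

namespace Connected

variable (hG : G.Connected)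

noncomputable def shortestWalk (u v : V) : G.Walk u v :=
  (hG.exists_walk_length_eq_dist u v).choose

lemma length_shortestWalk (u v : V) : (hG.shortestWalk u v).length = G.dist u v :=
  (hG.exists_walk_length_eq_dist u v).choose_spec

lemma isPath_shortestWalk (u v : V) : (hG.shortestWalk u v).IsPath :=
  Walk.isPath_of_length_eq_dist _ (hG.length_shortestWalk u v)

lemma not_nil_shortestWalk {u v : V} (h : u ≠ v) : ¬(hG.shortestWalk u v).Nil :=
  Walk.not_nil_of_ne h

lemma adj_snd_shortestWalk {u v : V} (h : u ≠ v) : G.Adj u (hG.shortestWalk u v).snd :=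
  Walk.adj_snd (hG.not_nil_shortestWalk h)

lemma dist_snd_shortestWalk_add_one {u v : V} (h : u ≠ v) :
    G.dist (hG.shortestWalk u v).snd v + 1 = G.dist u v := by
  refine le_antisymm ?_ ?_
  · have := dist_le (hG.shortestWalk u v).tail
    have := Walk.length_tail_add_one (hG.not_nil_shortestWalk h)
    have := hG.length_shortestWalk u v
    omega
  · calc G.dist u v ≤ G.dist u (hG.shortestWalk u v).snd + G.dist (hG.shortestWalk u v).snd v :=
          hG.dist_triangle
      _ = _ := by rw [dist_eq_one_iff_adj.2 (hG.adj_snd_shortestWalk h), add_comm]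

open Classical in
/-- Labels are coloured by the first step from `w` towards their vertex; labels sitting at `w`
itself each get a colour of their own. -/
noncomputable def branchColor (f : ι → V) (w : V) (i : ι) : ι ⊕ V :=
  if f i = w then .inl i else .inr (hG.shortestWalk w (f i)).snd

variable [Fintype ι] [DecidableEq ι] [DecidableEq V]

lemma sum_branchColor_eq_inl_le (f : ι → V) (w : V) (v : ι → ℕ) (k : ι) :
    ∑ i with hG.branchColor f w i = .inl k, v i ≤ v k := by
  calc _ ≤ ∑ i ∈ {k}, v i := sum_le_sum_of_subset fun i hi => ?_
    _ = v k := sum_singleton _ _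
  have hik := (mem_filter.1 hi).2
  unfold branchColor at hik
  split_ifs at hik
  exact mem_singleton.2 (Sum.inl.inj hik)

lemma two_mul_sum_branchColor_eq_inr_le (f : ι → V) (v : ι → ℕ) {w : V}
    (hw : ∀ a, ∑ i, v i * G.dist w (f i) ≤ ∑ i, v i * G.dist a (f i)) (a : V) :
    2 * ∑ i with hG.branchColor f w i = .inr a, v i ≤ ∑ i, v i := by
  have hmem : ∀ i, hG.branchColor f w i = .inr a ↔
      f i ≠ w ∧ (hG.shortestWalk w (f i)).snd = a := by
    intro i
    unfold branchColor
    split_ifs <;> simp [*]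
  by_cases hadj : G.Adj w a
  swap
  · rw [sum_eq_zero fun i hi => ?_, mul_zero]
    · exact Nat.zero_le _
    obtain ⟨hiw, rfl⟩ := (hmem i).1 (mem_filter.1 hi).2
    exact absurd (hG.adj_snd_shortestWalk (Ne.symm hiw)) hadj
  have key : ∀ i, v i * G.dist a (f i) + 2 * (if hG.branchColor f w i = .inr a then v i else 0)
      ≤ v i * G.dist w (f i) + v i := by
    intro i
    split_ifs with h
    · obtain ⟨hiw, rfl⟩ := (hmem i).1 h
      rw [← hG.dist_snd_shortestWalk_add_one (Ne.symm hiw)]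
      ring_nf
      exact le_refl _
    · have : G.dist a (f i) ≤ G.dist w (f i) + 1 := by
        have := hG.dist_triangle (u := a) (v := w) (w := f i)
        rw [dist_eq_one_iff_adj.2 hadj.symm] at this
        omega
      nlinarith
  have hsum := sum_le_sum fun i (_ : i ∈ univ) => key i
  rw [sum_add_distrib, sum_add_distrib, ← mul_sum, ← sum_filter] at hsum
  linarith [hw a]

end Connected

lemma IsTree.exists_isPath_mem_support_of_branchColor_ne (hG : G.IsTree) {f : ι → V} {w : V}
    {i j : ι} (h : hG.connected.branchColor f w i ≠ hG.connected.branchColor f w j) :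
    ∃ p : G.Walk (f i) (f j), p.IsPath ∧ w ∈ p.support := by
  obtain ⟨p, hp, -⟩ := hG.connected.exists_path_of_dist (f i) (f j)
  by_cases hi : f i = w
  · exact ⟨p, hp, hi ▸ p.start_mem_support⟩
  by_cases hj : f j = w
  · exact ⟨p, hp, hj ▸ p.end_mem_support⟩
  refine ⟨_, hG.isAcyclic.isPath_reverse_append_of_snd_ne
    (hG.connected.isPath_shortestWalk w (f i)) (hG.connected.isPath_shortestWalk w (f j)) ?_, ?_⟩
  · simpa [Connected.branchColor, hi, hj] using h
  · simp

end SimpleGraph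

theorem mem_submonoid_of_pairs_through_common_vertex_general
    {V : Type*} (G : SimpleGraph V)
    (hG : G.IsTree)
    (n : ℕ) (leaf : Fin n → V)
    (v : Fin n → ℕ)
    (hv : v ∈ AddSubmonoid.closure
      {x : Fin n → ℕ | ∃ i j : Fin n, i < j ∧
        x = Pi.single i 1 + Pi.single j 1}) :
    ∃ w : V, v ∈ AddSubmonoid.closure
      {x : Fin n → ℕ | ∃ i j : Fin n, i < j ∧
        (∃ pth : G.Walk (leaf i) (leaf j), pth.IsPath ∧ w ∈ pth.support) ∧
        x = Pi.single i 1 + Pi.single j 1} := by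
  classical
  have : Nonempty V := hG.connected.nonempty
  obtain ⟨heven, hle⟩ := even_sum_and_two_mul_le_sum_of_mem_closure <|
    AddSubmonoid.closure_mono (by rintro _ ⟨i, j, hij, rfl⟩; exact ⟨i, j, hij.ne, rfl⟩) hv
  obtain ⟨w, hw⟩ : ∃ w, ∀ a, ∑ i, v i * G.dist w (leaf i) ≤ ∑ i, v i * G.dist a (leaf i) :=
    ⟨_, fun a => Function.argmin_le (fun x => ∑ i, v i * G.dist x (leaf i)) a⟩
  refine ⟨w, AddSubmonoid.closure_mono ?_ <|
    mem_closure_of_two_mul_sum_fiber_le (hG.connected.branchColor leaf w) v heven ?_⟩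
  · rintro x ⟨i, j, hij, rfl⟩
    obtain ⟨p, hp, hwp⟩ := hG.exists_isPath_mem_support_of_branchColor_ne hij
    rcases lt_or_gt_of_ne (ne_of_apply_ne _ hij) with h | h
    · exact ⟨i, j, h, ⟨p, hp, hwp⟩, rfl⟩
    · exact ⟨j, i, h, ⟨p.reverse, hp.reverse, by simpa using hwp⟩, add_comm _ _⟩
  · rintro (k | a)
    · linarith [hG.connected.sum_branchColor_eq_inl_le leaf w v k, hle k]
    · exact hG.connected.two_mul_sum_branchColor_eq_inr_le leaf v hw a

/-- Let `τ` be a finite tree with `n ≥ 2` distinguished (distinct)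
leaves labeled `1, …, n`.  Say a pair `{i, j}` of labels passes through a vertex `w` if
`w` lies on the (unique) path in `τ` between the leaves labeled `i` and `j`.  Then every
element of the submonoid of `ℕⁿ` generated by the vectors `e_i + e_j` (`i < j`) lies,
for some vertex `w`, in the submonoid generated by the vectors `e_i + e_j` with
`{i, j}` passing through `w`. -/
theorem mem_submonoid_of_pairs_through_common_vertex
    {V : Type*} [Fintype V] (G : SimpleGraph V) [DecidableRel G.Adj]
    (hG : G.IsTree)
    (n : ℕ) (hn : 2 ≤ n) (leaf : Fin n → V)
    (hinj : Function.Injective leaf)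
    (hdeg : ∀ i, G.degree (leaf i) = 1)
    (v : Fin n → ℕ)
    (hv : v ∈ AddSubmonoid.closure
      {x : Fin n → ℕ | ∃ i j : Fin n, i < j ∧
        x = Pi.single i 1 + Pi.single j 1}) :
    ∃ w : V, v ∈ AddSubmonoid.closure
      {x : Fin n → ℕ | ∃ i j : Fin n, i < j ∧
        (∃ pth : G.Walk (leaf i) (leaf j), pth.IsPath ∧ w ∈ pth.support) ∧
        x = Pi.single i 1 + Pi.single j 1} :=
  mem_submonoid_of_pairs_through_common_vertex_general G hG n leaf v hv
end

section
/- For every 1 ≤ i < j < k < l ≤ n there exists a unit Laurent monomial m ∈ L (that is, m = c·x^u with c ∈ k^× and u ∈ ℤ^P) such that φ(q_{ijkl}) = m · p_{ijkl} in L. -/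
/-- The Laurent monomial `x_{kl}` in `L = K[ℤ^P]`. -/
noncomputable def Xmon (n : ℕ) (K : Type*) [Field K] (p : PIdx n) :
    AddMonoidAlgebra K (PIdx n → ℤ) :=
  AddMonoidAlgebra.single (Pi.single p 1) 1

/-- The Laurent monomial `z̃_{ab}` in `L' = K[ℤ^ℰ]`: it is `z_{ab}` when
`(a,b) ∈ ℰ` and `1` otherwise. -/
noncomputable def Zt (n : ℕ) (K : Type*) [Field K] (a b : Fin (n + 1)) :
    AddMonoidAlgebra K (EIdx n → ℤ) :=
  if h : 1 < a ∧ a < b ∧ (a, b) ≠ ((2 : Fin (n + 1)), (3 : Fin (n + 1))) then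
    AddMonoidAlgebra.single (Pi.single (⟨(a, b), h⟩ : EIdx n) 1) 1
  else 1

/-- The Plücker relation `p_{ijkl} = x_{ij}x_{kl} - x_{ik}x_{jl} + x_{il}x_{jk} ∈ L`. -/
noncomputable def plucker (n : ℕ) (K : Type*) [Field K] (i j k l : Fin (n + 1))
    (h0 : 0 < i) (hij : i < j) (hjk : j < k) (hkl : k < l) :
    AddMonoidAlgebra K (PIdx n → ℤ) :=
  Xmon n K ⟨(i, j), h0, hij⟩ * Xmon n K ⟨(k, l), h0.trans (hij.trans hjk), hkl⟩
    - Xmon n K ⟨(i, k), h0, hij.trans hjk⟩ *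
        Xmon n K ⟨(j, l), h0.trans hij, hjk.trans hkl⟩
    + Xmon n K ⟨(i, l), h0, (hij.trans hjk).trans hkl⟩ *
        Xmon n K ⟨(j, k), h0.trans hij, hjk⟩

/-- The quadric `q_{ijkl} = z̃_{ij}z̃_{kl} - z̃_{ik}z̃_{jl} + z̃_{il}z̃_{jk} ∈ L'`. -/
noncomputable def qpoly (n : ℕ) (K : Type*) [Field K] (i j k l : Fin (n + 1)) :
    AddMonoidAlgebra K (EIdx n → ℤ) :=
  Zt n K i j * Zt n K k l - Zt n K i k * Zt n K j l + Zt n K i l * Zt n K j k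

/-! `φ` sends every `z̃_{ab}` with `1 ≤ a < b`, including the pairs outside `ℰ` where `z̃_{ab} = 1`,
to the Laurent monomial `x^(e_{ab} + F a + F b + C)`, where `C = e₁₂ + e₁₃ - e₂₃`,
`F a = -e_{1a}` for `a ≠ 1` and `F 1 = -C`: for `(a, b) ∈ ℰ` this is the row of `D`, and for
`a = 1` or `(a, b) = (2, 3)` the exponent vanishes. So each of the three terms of `q_{ijkl}` is
mapped to the corresponding term of `p_{ijkl}` times the common monomial
`x^(F i + F j + F k + F l + 2C)`. -/

open AddMonoidAlgebra in
lemma single_matching_sum_eq {R G ι : Type*} [CommRing R] [AddCommMonoid G]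
    (e : ι → ι → G) (s : ι → G) (c : G) (i j k l : ι) :
    (single (e i j + s i + s j + c) 1 * single (e k l + s k + s l + c) 1
        - single (e i k + s i + s k + c) 1 * single (e j l + s j + s l + c) 1
        + single (e i l + s i + s l + c) 1 * single (e j k + s j + s k + c) 1 :
        AddMonoidAlgebra R G) =
      single (s i + s j + s k + s l + c + c) 1 *
        (single (e i j) 1 * single (e k l) 1 - single (e i k) 1 * single (e j l) 1
          + single (e i l) 1 * single (e j k) 1) := by
  simp only [single_mul_single, mul_one, mul_sub, mul_add]
  refine congrArg₂ (· + ·) (congrArg₂ (· - ·) ?_ ?_) ?_ <;> congr 1 <;> abel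

namespace PluckerMonomial

open AddMonoidAlgebra

section Exponents

variable (n : ℕ)

def pairVec (a b : Fin (n + 1)) : PIdx n → ℤ := fun p => if p.val = (a, b) then 1 else 0

def baseVec : PIdx n → ℤ := pairVec n 1 2 + pairVec n 1 3 - pairVec n 2 3

noncomputable def labelVec (a : Fin (n + 1)) : PIdx n → ℤ :=
  if a = 1 then -baseVec n else -pairVec n 1 a

noncomputable def zExp (a b : Fin (n + 1)) : PIdx n → ℤ :=
  pairVec n a b + labelVec n a + labelVec n b + baseVec n

end Exponents

variable {n : ℕ}

lemma val_one_two_three (hn : 3 ≤ n) :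
    ((1 : Fin (n + 1)) : ℕ) = 1 ∧ ((2 : Fin (n + 1)) : ℕ) = 2 ∧
      ((3 : Fin (n + 1)) : ℕ) = 3 := by
  obtain ⟨m, rfl⟩ := Nat.exists_eq_add_of_le' hn
  simp

lemma pairVec_eq_single {a b : Fin (n + 1)} (h : 0 < a ∧ a < b) :
    pairVec n a b = Pi.single (⟨(a, b), h⟩ : PIdx n) 1 := by
  funext p
  simp only [pairVec, Pi.single_apply, Subtype.ext_iff]

lemma labelVec_one : labelVec n 1 = -baseVec n :=
  if_pos rfl

lemma labelVec_of_ne_one {a : Fin (n + 1)} (ha : a ≠ 1) : labelVec n a = -pairVec n 1 a :=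
  if_neg ha

lemma dmat_row_eq_zExp (hn : 3 ≤ n) (q : EIdx n) : Dmat n q = zExp n q.val.1 q.val.2 := by
  obtain ⟨h1, h2, h3⟩ := val_one_two_three hn
  obtain ⟨⟨i, j⟩, hi, hij, hne⟩ := q
  have hi1 : i ≠ 1 := hi.ne'
  have hj1 : j ≠ 1 := (hi.trans hij).ne'
  funext ⟨⟨k, l⟩, hk, hkl⟩
  simp only [Fin.lt_def, Fin.val_zero, h1] at hi hij hk hkl
  simp only [ne_eq, Prod.ext_iff, Fin.ext_iff, h2, h3, not_and_or] at hne
  simp only [Dmat, zExp, labelVec_of_ne_one hi1, labelVec_of_ne_one hj1, baseVec, pairVec,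
    Pi.add_apply, Pi.sub_apply, Pi.neg_apply, Prod.ext_iff, Fin.ext_iff, h1, h2, h3]
  split_ifs <;> omega

lemma zExp_one_left {b : Fin (n + 1)} (hb : b ≠ 1) : zExp n 1 b = 0 := by
  funext p
  simp only [zExp, labelVec_one, labelVec_of_ne_one hb, baseVec, Pi.add_apply, Pi.neg_apply,
    Pi.sub_apply, Pi.zero_apply]
  ring

lemma zExp_two_three (hn : 3 ≤ n) : zExp n 2 3 = 0 := by
  obtain ⟨h1, h2, h3⟩ := val_one_two_three hn
  have h21 : (2 : Fin (n + 1)) ≠ 1 := by rw [ne_eq, Fin.ext_iff, h1, h2]; omega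
  have h31 : (3 : Fin (n + 1)) ≠ 1 := by rw [ne_eq, Fin.ext_iff, h1, h3]; omega
  funext p
  simp only [zExp, labelVec_of_ne_one h21, labelVec_of_ne_one h31, baseVec, Pi.add_apply,
    Pi.neg_apply, Pi.sub_apply, Pi.zero_apply]
  ring

lemma map_Zt {K : Type*} [Field K] (hn : 3 ≤ n)
    (φ : AddMonoidAlgebra K (EIdx n → ℤ) →ₐ[K] AddMonoidAlgebra K (PIdx n → ℤ))
    (hφ : ∀ v : EIdx n → ℤ, φ (single v 1) = single (Matrix.vecMul v (Dmat n)) 1)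
    {a b : Fin (n + 1)} (ha : 0 < a) (hab : a < b) :
    φ (Zt n K a b) = single (zExp n a b) 1 := by
  unfold Zt
  split_ifs with h
  · rw [hφ, Matrix.single_one_vecMul, Matrix.row, dmat_row_eq_zExp hn]
  · have hz : zExp n a b = 0 := by
      by_cases ha1 : 1 < a
      · obtain ⟨rfl, rfl⟩ : a = 2 ∧ b = 3 := by simpa [ha1, hab] using h
        exact zExp_two_three hn
      · obtain rfl : a = 1 := by
          obtain ⟨h1, -⟩ := val_one_two_three hn
          rw [Fin.lt_def] at ha ha1
          rw [Fin.ext_iff]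
          omega
        exact zExp_one_left hab.ne'
    rw [hz, map_one, one_def]

end PluckerMonomial

open AddMonoidAlgebra PluckerMonomial in
theorem phi_qpoly_eq_monomial_mul_plucker_general (n : ℕ)
    (K : Type*) [Field K]
    (φ : AddMonoidAlgebra K (EIdx n → ℤ) →ₐ[K] AddMonoidAlgebra K (PIdx n → ℤ))
    (hφ : ∀ v : EIdx n → ℤ,
      φ (AddMonoidAlgebra.single v 1) = AddMonoidAlgebra.single (Matrix.vecMul v (Dmat n)) 1) :
    ∀ (i j k l : Fin (n + 1)) (h0 : 0 < i) (hij : i < j) (hjk : j < k) (hkl : k < l),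
      ∃ (c : K) (u : PIdx n → ℤ), c ≠ 0 ∧
        φ (qpoly n K i j k l) =
          AddMonoidAlgebra.single u c * plucker n K i j k l h0 hij hjk hkl := by
  intro i j k l h0 hij hjk hkl
  have hn : 3 ≤ n := by
    have := l.isLt
    rw [Fin.lt_def] at h0 hij hjk hkl
    omega
  have hik := hij.trans hjk
  have hjl := hjk.trans hkl
  have hX : ∀ (a b : Fin (n + 1)) (h : 0 < a ∧ a < b),
      Xmon n K ⟨(a, b), h⟩ = single (pairVec n a b) 1 :=
    fun a b h => by rw [pairVec_eq_single h, Xmon]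
  refine ⟨1, labelVec n i + labelVec n j + labelVec n k + labelVec n l + baseVec n + baseVec n,
    one_ne_zero, ?_⟩
  rw [qpoly, map_add, map_sub, map_mul, map_mul, map_mul,
    map_Zt hn φ hφ h0 hij, map_Zt hn φ hφ (h0.trans hik) hkl,
    map_Zt hn φ hφ h0 hik, map_Zt hn φ hφ (h0.trans hij) hjl,
    map_Zt hn φ hφ h0 (hik.trans hkl), map_Zt hn φ hφ (h0.trans hij) hjk, plucker]
  simp only [hX, zExp]
  exact single_matching_sum_eq _ _ _ i j k l

/-- Let `φ : L' → L` be the `K`-algebra homomorphism with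
`φ(z_{ij}) = ∏_{(k,l)} x_{kl}^{D_{(i,j),(k,l)}}`.  Then for all labels
`1 ≤ i < j < k < l ≤ n` there is a unit Laurent monomial `m = c·x^u` (with `c ∈ K^×`,
`u ∈ ℤ^P`) such that `φ(q_{ijkl}) = m · p_{ijkl}` in `L`. -/
theorem phi_qpoly_eq_monomial_mul_plucker (n : ℕ) (hn : 4 ≤ n)
    (K : Type*) [Field K]
    (φ : AddMonoidAlgebra K (EIdx n → ℤ) →ₐ[K] AddMonoidAlgebra K (PIdx n → ℤ))
    (hφ : ∀ v : EIdx n → ℤ,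
      φ (AddMonoidAlgebra.single v 1) = AddMonoidAlgebra.single (Matrix.vecMul v (Dmat n)) 1) :
    ∀ (i j k l : Fin (n + 1)) (h0 : 0 < i) (hij : i < j) (hjk : j < k) (hkl : k < l),
      ∃ (c : K) (u : PIdx n → ℤ), c ≠ 0 ∧
        φ (qpoly n K i j k l) =
          AddMonoidAlgebra.single u c * plucker n K i j k l h0 hij hjk hkl :=
  phi_qpoly_eq_monomial_mul_plucker_general n K φ hφ
end
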